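/- arXiv:2310.11582 — 4 statements merged into one kernel-verified Lean document; each statement's English description precedes it below -/
import Mathlib

section
/- Let L be a countable first-order language and let K be a nonempty Fraïssé class of L-structures all of whose members are finitely generated and which has only countably many members up to isomorphism. Then there exists a countable L-structure M that is ultrahomogeneous and whose age (the class of finitely generated L-structures embeddable into M) equals K, and any two countable ultrahomogeneous L-structures with age K are isomorphic. -/
open FirstOrder FirstOrder.Language Set Cardinal

universe u

/-!
Fix representatives `rep n` of the isomorphism types in `K` and build the limit as the union of a
chain `G₀ ↪ G₁ ↪ ⋯` in `K`. A task at stage `s` is a pair of embeddings `f : rep i ↪ Gₛ` and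
`g : rep i ↪ rep j`; there are countably many, they are scheduled along `Nat.pair`, and each is
solved at its turn by amalgamating `f` and `g`. The union `M` then has the extension property:
every embedding `A ↪ M` with `A ∈ K` extends along every embedding `A ↪ B` with `B ∈ K`.
Joint embedding puts all of `K` into the age of `M`, heredity keeps the age inside `K`, and the
extension property is the back-and-forth step making `M` ultrahomogeneous. Uniqueness is
back-and-forth between two such structures.
-/

namespace FirstOrder.Language

open CategoryTheory Structure Substructure

variable {L : Language}

theorem DirectLimit.exists_of_comp_eq_of_fg {ι : Type*} [Preorder ι] [IsDirectedOrder ι]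
    [Nonempty ι] {G : ι → Type*} [∀ i, L.Structure (G i)] {f : ∀ i j, i ≤ j → G i ↪[L] G j}
    [DirectedSystem G fun i j h => f i j h] {A : Type*} [L.Structure A] (hA : FG L A)
    (p : A ↪[L] DirectLimit G f) :
    ∃ i, ∃ q : A ↪[L] G i, (DirectLimit.of L ι G f i).comp q = p := by
  obtain ⟨i, T, hT⟩ := DirectLimit.exists_fg_substructure_in_Sigma _ (hA.range p.toHom)
  have hp : ∀ a, p a ∈ (DirectLimit.of L ι G f i).toHom.range := fun a =>
    Hom.map_le_range (hT ▸ Hom.mem_range.2 ⟨a, rfl⟩)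
  refine ⟨i, (DirectLimit.of L ι G f i).equivRange.symm.toEmbedding.comp (p.codRestrict _ hp), ?_⟩
  ext a
  rw [Embedding.comp_apply, ← Embedding.equivRange_apply, Embedding.comp_apply,
    Equiv.coe_toEmbedding, Equiv.apply_symm_apply, Embedding.codRestrict_apply]

theorem IsFraisse.exists_representatives {K : Set (Bundled.{u} L.Structure)} (hK : IsFraisse K) :
    ∃ rep : ℕ → Bundled.{u} L.Structure,
      (∀ n, rep n ∈ K) ∧ ∀ A ∈ K, ∃ n, Nonempty (A ≃[L] rep n) := by
  obtain ⟨F, hF⟩ := hK.is_essentially_countable.exists_eq_range (hK.is_nonempty.image _)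
  refine ⟨fun n => (F n).out, fun n => ?_, fun A hA => ?_⟩
  · obtain ⟨A, hA, hAF⟩ : F n ∈ Quotient.mk' '' K := hF ▸ mem_range_self n
    exact (hK.is_equiv_invariant (Quotient.mk_eq_iff_out.1 hAF)).1 hA
  · obtain ⟨n, hn⟩ : Quotient.mk' A ∈ range F := hF ▸ mem_image_of_mem _ hA
    exact ⟨n, Quotient.mk_eq_iff_out.1 hn.symm⟩

section ExtensionProperty

variable (K : Set (Bundled.{u} L.Structure)) (M : Type u) [L.Structure M]

def ExtensionProperty : Prop :=
  ∀ A ∈ K, ∀ B ∈ K, ∀ (p : A ↪[L] M) (g : A ↪[L] B), ∃ h : B ↪[L] M, h.comp g = p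

variable {K M}

theorem ExtensionProperty.of_representatives {ι : Type*} {rep : ι → Bundled.{u} L.Structure}
    (hrep : ∀ A ∈ K, ∃ i, Nonempty (A ≃[L] rep i))
    (hext : ∀ i j (p : rep i ↪[L] M) (g : rep i ↪[L] rep j), ∃ h : rep j ↪[L] M, h.comp g = p) :
    ExtensionProperty K M := by
  intro A hA B hB p g
  obtain ⟨i, ⟨eA⟩⟩ := hrep A hA
  obtain ⟨j, ⟨eB⟩⟩ := hrep B hB
  obtain ⟨h, hh⟩ := hext i j (p.comp eA.symm.toEmbedding)
    (eB.toEmbedding.comp (g.comp eA.symm.toEmbedding))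
  refine ⟨h.comp eB.toEmbedding, Embedding.ext fun a => ?_⟩
  simpa using DFunLike.congr_fun hh (eA a)

theorem ExtensionProperty.isExtensionPair (hM : ExtensionProperty K M) (hage : L.age M ⊆ K) :
    L.IsExtensionPair M M := by
  rintro ⟨φ, φ_fg⟩ m
  let S := φ.dom ⊔ closure L {m}
  have S_fg : S.FG := φ_fg.sup (fg_closure_singleton m)
  obtain ⟨h, hh⟩ := hM (Bundled.of φ.dom) (hage (age.fg_substructure φ_fg))
    (Bundled.of S) (hage (age.fg_substructure S_fg))
    ((subtype φ.cod).comp φ.toEquiv.toEmbedding) (inclusion le_sup_left)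
  refine ⟨⟨⟨S, h.toHom.range, h.equivRange⟩, S_fg⟩,
    subset_closure.trans (le_sup_right : _ ≤ S) (mem_singleton m), ⟨le_sup_left, ?_⟩⟩
  ext x
  exact DFunLike.congr_fun hh x

theorem ExtensionProperty.isUltrahomogeneous (hM : ExtensionProperty K M) (hage : L.age M ⊆ K)
    (hcg : CG L M) : L.IsUltrahomogeneous M :=
  (isUltrahomogeneous_iff_IsExtensionPair hcg).2 (hM.isExtensionPair hage)

theorem ExtensionProperty.subset_age (hM : ExtensionProperty K M) (hjep : JointEmbedding K)
    (hfg : ∀ B ∈ K, FG L B) {A : Bundled.{u} L.Structure} (hA : A ∈ K) (e : A ↪[L] M) :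
    K ⊆ L.age M := by
  intro B hB
  obtain ⟨C, hC, ⟨eA⟩, ⟨eB⟩⟩ := hjep A hA B hB
  obtain ⟨h, -⟩ := hM A hA C hC e eA
  exact ⟨hfg B hB, ⟨h.comp eB⟩⟩

end ExtensionProperty

namespace FraisseChain

variable {K : Set (Bundled.{u} L.Structure)} (rep : ℕ → Bundled.{u} L.Structure)

def Task (G : Type u) [L.Structure G] : Type u :=
  Σ ij : ℕ × ℕ, (rep ij.1 ↪[L] G) × (rep ij.1 ↪[L] rep ij.2)

variable {rep}

def Task.map {G G' : Type u} [L.Structure G] [L.Structure G'] (ε : G ↪[L] G') (t : Task rep G) :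
    Task rep G' :=
  ⟨t.1, ε.comp t.2.1, t.2.2⟩

def Task.SolvedBy {G G' : Type u} [L.Structure G] [L.Structure G'] (t : Task rep G)
    (ε : G ↪[L] G') : Prop :=
  ∃ h : rep t.1.2 ↪[L] G', ε.comp t.2.1 = h.comp t.2.2

theorem Task.map_refl {G : Type u} [L.Structure G] (t : Task rep G) :
    t.map (Embedding.refl L G) = t :=
  rfl

theorem Task.map_map {G G' G'' : Type u} [L.Structure G] [L.Structure G'] [L.Structure G'']
    (ε : G ↪[L] G') (ε' : G' ↪[L] G'') (t : Task rep G) :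
    (t.map ε).map ε' = t.map (ε'.comp ε) :=
  rfl

theorem Task.countable [Countable (Σ l, L.Functions l)] (hrep : ∀ n, FG L (rep n))
    (G : Type u) [L.Structure G] [Countable G] : Countable (Task rep G) :=
  have (n : ℕ) : Countable (rep n) := cg_iff_countable.1 (hrep n).cg
  have (m n : ℕ) : Countable (rep m ↪[L] rep n) := (hrep m).countable_embedding _
  have (n : ℕ) : Countable (rep n ↪[L] G) := (hrep n).countable_embedding _
  inferInstanceAs (Countable (Σ ij : ℕ × ℕ, (rep ij.1 ↪[L] G) × (rep ij.1 ↪[L] rep ij.2)))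

theorem exists_surjective_tasks [Countable (Σ l, L.Functions l)] (hfg : ∀ A ∈ K, FG L A)
    (hrep : ∀ n, rep n ∈ K) (hcover : ∀ A ∈ K, ∃ n, Nonempty (A ≃[L] rep n)) :
    ∃ τ : ∀ G ∈ K, ℕ → Task rep G, ∀ G hG, Function.Surjective (τ G hG) := by
  have (G : Bundled.{u} L.Structure) (hG : G ∈ K) :
      ∃ τG : ℕ → Task rep G, Function.Surjective τG := by
    have : Countable G := cg_iff_countable.1 (hfg G hG).cg
    have := Task.countable (fun n => hfg _ (hrep n)) G
    obtain ⟨n, ⟨e⟩⟩ := hcover G hG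
    have : Nonempty (Task rep G) := ⟨⟨(n, n), e.symm.toEmbedding, Embedding.refl L _⟩⟩
    exact exists_surjective_nat _
  choose τ hτ using this
  exact ⟨τ, hτ⟩

theorem Task.exists_solvedBy (hK : Amalgamation K) (hrep : ∀ n, rep n ∈ K)
    {G : Bundled.{u} L.Structure} (hG : G ∈ K) (t : Task rep G) :
    ∃ (G' : Bundled.{u} L.Structure) (ε : G ↪[L] G'), G' ∈ K ∧ t.SolvedBy ε := by
  obtain ⟨G', ε, h, hG', hcomm⟩ := hK _ G _ t.2.1 t.2.2 (hrep _) hG (hrep _)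
  exact ⟨G', ε, hG', h, hcomm⟩

variable (K rep) in
structure State where
  G : Bundled.{u} L.Structure
  mem : G ∈ K
  tasks : ℕ → Task rep G

variable (τ : ∀ G ∈ K, ℕ → Task rep G)

-- Slot `Nat.pair s k` of the queue receives the `k`-th task of the structure built at stage `s`;
-- it is carried forward along the chain until step `Nat.pair s k ≥ s` solves it.
def State.fresh (G : Bundled.{u} L.Structure) (hG : G ∈ K) : State K rep :=
  ⟨G, hG, fun m => τ G hG m.unpair.2⟩

variable (hK : Amalgamation K) (hrep : ∀ n, rep n ∈ K)

noncomputable def State.succ (n : ℕ) (s : State K rep) : Σ' s' : State K rep, s.G ↪[L] s'.G :=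
  let h := (s.tasks n).exists_solvedBy hK hrep s.mem
  let G' := h.choose
  let ε := h.choose_spec.choose
  let hG' := h.choose_spec.choose_spec.1
  ⟨⟨G', hG', fun m =>
      if m.unpair.1 = n + 1 then (State.fresh τ G' hG').tasks m else (s.tasks m).map ε⟩, ε⟩

theorem State.succ_solves (n : ℕ) (s : State K rep) :
    (s.tasks n).SolvedBy (s.succ τ hK hrep n).2 :=
  ((s.tasks n).exists_solvedBy hK hrep s.mem).choose_spec.choose_spec.2

noncomputable def chain : ℕ → State K rep
  | 0 => State.fresh τ (rep 0) (hrep 0)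
  | n + 1 => ((chain n).succ τ hK hrep n).1

noncomputable def step (n : ℕ) : (chain τ hK hrep n).G ↪[L] (chain τ hK hrep (n + 1)).G :=
  ((chain τ hK hrep n).succ τ hK hrep n).2

noncomputable def stageMap : ∀ m n, m ≤ n → (chain τ hK hrep m).G ↪[L] (chain τ hK hrep n).G :=
  DirectedSystem.natLERec (G' := fun n => (chain τ hK hrep n).G) (step τ hK hrep)

theorem stageMap_succ (n : ℕ) : stageMap τ hK hrep n (n + 1) n.le_succ = step τ hK hrep n := by
  ext x
  simp [stageMap, Nat.leRecOn_succ, Nat.leRecOn_self]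

theorem stageMap_self (n : ℕ) : stageMap τ hK hrep n n le_rfl = Embedding.refl L _ := by
  ext x
  simp [stageMap, Nat.leRecOn_self]

theorem step_comp_stageMap {s n : ℕ} (h : s ≤ n) :
    (step τ hK hrep n).comp (stageMap τ hK hrep s n h) =
      stageMap τ hK hrep s (n + 1) (h.trans n.le_succ) := by
  ext x
  simp [stageMap, Nat.leRecOn_succ h]

theorem chain_succ_tasks (n m : ℕ) :
    (chain τ hK hrep (n + 1)).tasks m =
      if m.unpair.1 = n + 1 then τ _ (chain τ hK hrep (n + 1)).mem m.unpair.2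
      else ((chain τ hK hrep n).tasks m).map (step τ hK hrep n) :=
  rfl

theorem chain_tasks_of_unpair_fst {s m : ℕ} (hm : m.unpair.1 = s) :
    (chain τ hK hrep s).tasks m = τ _ (chain τ hK hrep s).mem m.unpair.2 := by
  cases s with
  | zero => rfl
  | succ s => rw [chain_succ_tasks, if_pos hm]

theorem chain_tasks_pair (s k : ℕ) {n : ℕ} (hsn : s ≤ n) (hn : n ≤ Nat.pair s k) :
    (chain τ hK hrep n).tasks (Nat.pair s k) =
      (τ _ (chain τ hK hrep s).mem k).map (stageMap τ hK hrep s n hsn) := by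
  induction n, hsn using Nat.le_induction with
  | base =>
    rw [stageMap_self, Task.map_refl,
      chain_tasks_of_unpair_fst τ hK hrep (by rw [Nat.unpair_pair]), Nat.unpair_pair]
  | succ n hsn ih =>
    have hs : (Nat.pair s k).unpair.1 ≠ n + 1 := by rw [Nat.unpair_pair]; omega
    rw [chain_succ_tasks, if_neg hs, ih (n.le_succ.trans hn), Task.map_map,
      step_comp_stageMap]

theorem solvedBy_step (s k : ℕ) :
    ((τ _ (chain τ hK hrep s).mem k).map
      (stageMap τ hK hrep s _ (Nat.left_le_pair s k))).SolvedBy (step τ hK hrep (Nat.pair s k)) := by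
  rw [← chain_tasks_pair τ hK hrep s k _ le_rfl]
  exact State.succ_solves τ hK hrep _ _

instance : DirectedSystem (fun n => ((chain τ hK hrep n).G : Type u))
    fun m n h => stageMap τ hK hrep m n h :=
  DirectedSystem.natLERec.directedSystem _

abbrev Limit : Type u :=
  DirectLimit (fun n => ((chain τ hK hrep n).G : Type u)) (stageMap τ hK hrep)

theorem Limit.exists_comp_eq (hτ : ∀ G hG, Function.Surjective (τ G hG)) {i : ℕ}
    (hi : FG L (rep i)) (j : ℕ) (p : rep i ↪[L] Limit τ hK hrep) (g : rep i ↪[L] rep j) :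
    ∃ h : rep j ↪[L] Limit τ hK hrep, h.comp g = p := by
  obtain ⟨s, f, hf⟩ := DirectLimit.exists_of_comp_eq_of_fg hi p
  obtain ⟨k, hk⟩ := hτ _ (chain τ hK hrep s).mem ⟨(i, j), f, g⟩
  set n := Nat.pair s k
  obtain ⟨h, hh⟩ : ∃ h : rep j ↪[L] (chain τ hK hrep (n + 1)).G,
      (step τ hK hrep n).comp ((stageMap τ hK hrep s n (Nat.left_le_pair s k)).comp f) =
        h.comp g := by
    have hsolved := solvedBy_step τ hK hrep s k
    rwa [hk] at hsolved
  refine ⟨(DirectLimit.of L ℕ _ _ (n + 1)).comp h, Embedding.ext fun x => ?_⟩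
  have hx := DFunLike.congr_fun hh x
  simp only [Embedding.comp_apply] at hx ⊢
  rw [← hx, ← stageMap_succ, DirectLimit.of_f, DirectLimit.of_f, ← hf, Embedding.comp_apply]

end FraisseChain

open FraisseChain in
theorem IsFraisse.exists_countable_isUltrahomogeneous_age_eq [Countable (Σ l, L.Functions l)]
    {K : Set (Bundled.{u} L.Structure)} (hK : IsFraisse K) :
    ∃ M : Bundled.{u} L.Structure, Countable M ∧ L.IsUltrahomogeneous M ∧ L.age M = K := by
  obtain ⟨rep, hrep, hcover⟩ := hK.exists_representatives
  obtain ⟨τ, hτ⟩ := exists_surjective_tasks hK.FG hrep hcover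
  let M := Limit τ hK.amalgamation hrep
  have hcg : CG L M :=
    DirectLimit.cg _ fun n => (hK.FG _ (chain τ hK.amalgamation hrep n).mem).cg
  have hage_sub : L.age M ⊆ K := by
    rw [age_directLimit]
    exact iUnion_subset fun n => hK.hereditary _ (chain τ hK.amalgamation hrep n).mem
  have hext : ExtensionProperty K M := .of_representatives hcover fun i =>
    Limit.exists_comp_eq τ hK.amalgamation hrep hτ (hK.FG _ (hrep i))
  have hsub_age : K ⊆ L.age M := hext.subset_age hK.jointEmbedding hK.FG
    (chain τ hK.amalgamation hrep 0).mem
    (DirectLimit.of L ℕ _ (stageMap τ hK.amalgamation hrep) 0)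
  exact ⟨Bundled.of M, cg_iff_countable.1 hcg, hext.isUltrahomogeneous hage_sub hcg,
    hage_sub.antisymm hsub_age⟩

end FirstOrder.Language

/-- If `L` is a countable language and `K` is a nonempty Fraïssé class of
finitely generated `L`-structures with only countably many members up to isomorphism, then
there is a countable ultrahomogeneous `L`-structure whose age is `K` (a Fraïssé limit), and
any two countable ultrahomogeneous structures with age `K` are isomorphic. -/
theorem fraisse_limit_exists_unique {L : FirstOrder.Language.{u, u}}
    (hL : L.card ≤ ℵ₀) (K : Set (CategoryTheory.Bundled.{u} L.Structure))
    (hK : L.IsFraisse K) :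
    (∃ M : CategoryTheory.Bundled.{u} L.Structure,
        Countable M ∧ L.IsUltrahomogeneous M ∧ L.age M = K) ∧
      ∀ M N : CategoryTheory.Bundled.{u} L.Structure,
        Countable M → Countable N →
        L.IsUltrahomogeneous M → L.IsUltrahomogeneous N →
        L.age M = K → L.age N = K → Nonempty (M ≃[L] N) := by
  have : Countable L.Symbols := Cardinal.mk_le_aleph0_iff.1 hL
  refine ⟨hK.exists_countable_isUltrahomogeneous_age_eq, fun M N _ _ hMu hNu hMa hNa => ?_⟩
  exact IsFraisseLimit.nonempty_equiv (K := K) ⟨hMu, hMa⟩ ⟨hNu, hNa⟩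
end

section
/- Let L be a countable relational first-order language and let K be a nonempty Fraïssé class of finite (equivalently, finitely generated) L-structures with only countably many members up to isomorphism, and let M be the countable ultrahomogeneous L-structure whose age is K. Then K has the strong amalgamation property if and only if M has trivial group-theoretic definable closure. -/
open FirstOrder FirstOrder.Language Set Cardinal

universe u

/-- A class of structures has the strong amalgamation property if any two embeddings
`i₁ : A ↪ B`, `i₂ : A ↪ C` between members have an amalgam `j₁ : B ↪ D`, `j₂ : C ↪ D`
with `j₁ ∘ i₁ = j₂ ∘ i₂` whose images intersect exactly in the image of `A`. -/
def StrongAmalgamation {L : FirstOrder.Language.{u, u}}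
    (K : Set (CategoryTheory.Bundled.{u} L.Structure)) : Prop :=
  ∀ (A B C : CategoryTheory.Bundled.{u} L.Structure) (i₁ : A ↪[L] B) (i₂ : A ↪[L] C),
    A ∈ K → B ∈ K → C ∈ K →
      ∃ (D : CategoryTheory.Bundled.{u} L.Structure) (j₁ : B ↪[L] D) (j₂ : C ↪[L] D),
        D ∈ K ∧ j₁.comp i₁ = j₂.comp i₂ ∧
          Set.range j₁ ∩ Set.range j₂ = Set.range (j₁.comp i₁)

/-- The group-theoretic definable closure of a set `s` in `M`: the set of points fixed by
every automorphism of `M` fixing `s` pointwise. -/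
def gdcl (L : FirstOrder.Language.{u, u}) (M : Type u) [L.Structure M] (s : Set M) : Set M :=
  {b : M | ∀ g : M ≃[L] M, (∀ a ∈ s, g a = a) → g b = b}

open scoped Pointwise

/-!
Automorphisms of `M` act on `M`, and trivial `gdcl` says exactly that the pointwise stabiliser of
a finite set `s` moves every point outside `s` (in a relational language every set is a
substructure).

Given strong amalgamation, amalgamate `B = ⟨A, b⟩` with itself over `A`, embed the amalgam into
`M` and extend the two copies of `B` to automorphisms `σ`, `τ`: then `σ⁻¹ * τ` fixes `A` and,
since the two copies of `b` differ, moves `b`.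

Conversely, if stabilisers of finite sets move all other points, then no point outside a finite
set `s` can have its orbit under the stabiliser of `s` trapped in a finite set; moving one point
at a time, any finite set can be pushed off a finite set disjoint from `s` while fixing `s`
(a relative form of P. M. Neumann's lemma). Realise `B` and `C` in `M` over a common copy of `A` by
ultrahomogeneity and push the copy of `C` off `B \ A`; the two images then span a strong
amalgam.
-/

section FixingSubgroup

variable {G X : Type*} [Group G] [MulAction G X]

theorem exists_mem_fixingSubgroup_smul_notMem
    (hG : ∀ s : Set X, s.Finite → ∀ x ∉ s, ∃ g ∈ fixingSubgroup G s, g • x ≠ x)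
    {s t : Set X} (hs : s.Finite) (ht : t.Finite) {x : X} (hx : x ∉ s) :
    ∃ g ∈ fixingSubgroup G s, g • x ∉ t := by
  by_contra! hstay
  -- fixing `t \ {x}` as well traps `x`, whose only possible images now are fixed points
  obtain ⟨g, hg, hgx⟩ := hG (s ∪ (t \ {x})) (hs.union ht.sdiff) x (by simp [hx])
  rw [mem_fixingSubgroup_iff] at hg
  have hgx_mem : g • x ∈ t \ {x} :=
    ⟨hstay g ((mem_fixingSubgroup_iff G).2 fun y hy => hg y (.inl hy)), hgx⟩
  exact hgx (smul_left_cancel g (hg _ (.inr hgx_mem)))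

theorem exists_mem_fixingSubgroup_disjoint_smul
    (hG : ∀ s : Set X, s.Finite → ∀ x ∉ s, ∃ g ∈ fixingSubgroup G s, g • x ≠ x)
    {s t u : Set X} (hs : s.Finite) (ht : t.Finite) (hu : u.Finite) (hts : Disjoint t s) :
    ∃ g ∈ fixingSubgroup G s, Disjoint (g • u) t := by
  induction u, hu using Set.Finite.induction_on with
  | empty => exact ⟨1, one_mem _, by simp⟩
  | @insert x u hxu hu ih =>
    obtain ⟨g, hg, hdisj⟩ := ih
    by_cases hgx : g • x ∈ t
    · have hgx_out : g • x ∉ s ∪ g • u := by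
        rintro (h | h)
        · exact Set.disjoint_left.1 hts hgx h
        · exact hxu (Set.smul_mem_smul_set_iff.1 h)
      obtain ⟨h, hh, hhx⟩ := exists_mem_fixingSubgroup_smul_notMem hG
        (hs.union hu.smul_set) ht hgx_out
      rw [mem_fixingSubgroup_iff] at hh
      refine ⟨h * g, mul_mem ((mem_fixingSubgroup_iff G).2 fun y hy => hh y (.inl hy)) hg, ?_⟩
      have hhu : h • g • u = g • u := by
        rw [← Set.image_smul]
        exact (Set.image_congr fun y hy => hh y (.inr hy)).trans (Set.image_id' _)
      rw [mul_smul, Set.smul_set_insert, Set.smul_set_insert, hhu, Set.disjoint_insert_left]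
      exact ⟨hhx, hdisj⟩
    · exact ⟨g, hg, by rw [Set.smul_set_insert, Set.disjoint_insert_left]; exact ⟨hgx, hdisj⟩⟩

end FixingSubgroup

namespace FirstOrder.Language

section Automorphisms

variable {L : Language} {M : Type*} [L.Structure M]

instance : Group (M ≃[L] M) where
  mul f g := f.comp g
  one := Equiv.refl L M
  inv := Equiv.symm
  mul_assoc f g h := Equiv.comp_assoc h g f
  one_mul := Equiv.refl_comp
  mul_one := Equiv.comp_refl
  inv_mul_cancel := Equiv.symm_comp_self

instance : MulAction (M ≃[L] M) M where
  smul g x := g x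
  one_smul _ := rfl
  mul_smul _ _ _ := rfl

@[simp]
theorem Equiv.smul_def (g : M ≃[L] M) (x : M) : g • x = g x := rfl

theorem subset_gdcl (s : Set M) : s ⊆ gdcl L M s := fun a ha _ hg => hg a ha

theorem gdcl_eq_self_iff {s : Set M} :
    gdcl L M s = s ↔ ∀ b ∉ s, ∃ g ∈ fixingSubgroup (M ≃[L] M) s, g • b ≠ b := by
  rw [Set.Subset.antisymm_iff, and_iff_left (subset_gdcl s)]
  refine forall_congr' fun b => ?_
  rw [not_imp_comm]
  simp [gdcl, mem_fixingSubgroup_iff]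

end Automorphisms

open Substructure

variable {L : Language.{u, u}} {M : Type u} [L.Structure M]

theorem exists_smul_ne_of_strongAmalgamation (hhom : L.IsUltrahomogeneous M)
    (hSAP : StrongAmalgamation (L.age M)) {A : L.Substructure M} (hA : A.FG) {b : M}
    (hb : b ∉ A) : ∃ g ∈ fixingSubgroup (M ≃[L] M) (A : Set M), g • b ≠ b := by
  set B := A ⊔ closure L {b}
  have hAB : A ≤ B := le_sup_left
  have hbB : b ∈ B := (le_sup_right : closure L {b} ≤ B) (subset_closure rfl)
  have hB : B.FG := hA.sup (fg_closure_singleton b)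
  obtain ⟨D, j₁, j₂, ⟨-, ⟨e⟩⟩, hcomm, hinter⟩ := hSAP (.mk A) (.mk B) (.mk B)
    (Substructure.inclusion hAB) (Substructure.inclusion hAB) (age.fg_substructure hA)
    (age.fg_substructure hB) (age.fg_substructure hB)
  obtain ⟨σ, hσ⟩ := hhom B hB (e.comp j₁)
  obtain ⟨τ, hτ⟩ := hhom B hB (e.comp j₂)
  have hστ : ∀ x : B, (σ⁻¹ * τ) • (x : M) = x ↔ j₁ x = j₂ x := fun x => by
    rw [mul_smul, inv_smul_eq_iff, Equiv.smul_def, Equiv.smul_def, ← e.injective.eq_iff]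
    have hσx : e (j₁ x) = σ x := DFunLike.congr_fun hσ x
    have hτx : e (j₂ x) = τ x := DFunLike.congr_fun hτ x
    rw [hσx, hτx, eq_comm]
  refine ⟨σ⁻¹ * τ, (mem_fixingSubgroup_iff _).2 fun a ha => ?_, fun hfix => hb ?_⟩
  · exact (hστ (Substructure.inclusion hAB ⟨a, ha⟩)).2 (DFunLike.congr_fun hcomm ⟨a, ha⟩)
  · obtain ⟨a, ha⟩ : j₁ ⟨b, hbB⟩ ∈ Set.range (j₁.comp (Substructure.inclusion hAB)) :=
      hinter ▸ ⟨⟨_, rfl⟩, ⟨_, ((hστ ⟨b, hbB⟩).1 hfix).symm⟩⟩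
    have hab : (a : M) = b := congrArg Subtype.val (j₁.injective ha)
    exact hab ▸ a.2

theorem exists_strongAmalgam_of_embeddings {A B C : CategoryTheory.Bundled.{u} L.Structure}
    (hB : B ∈ L.age M) (hC : C ∈ L.age M) (i₁ : A ↪[L] B) (i₂ : A ↪[L] C) (f : B ↪[L] M)
    (g : C ↪[L] M) (hfg : f.comp i₁ = g.comp i₂)
    (hinter : Set.range f ∩ Set.range g ⊆ Set.range (f.comp i₁)) :
    ∃ (D : CategoryTheory.Bundled.{u} L.Structure) (j₁ : B ↪[L] D) (j₂ : C ↪[L] D),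
      D ∈ L.age M ∧ j₁.comp i₁ = j₂.comp i₂ ∧
        Set.range j₁ ∩ Set.range j₂ = Set.range (j₁.comp i₁) := by
  set D := f.toHom.range ⊔ g.toHom.range
  let j₁ := Embedding.codRestrict D f fun x =>
    (le_sup_left : f.toHom.range ≤ D) (f.toHom.mem_range_self x)
  let j₂ := Embedding.codRestrict D g fun x =>
    (le_sup_right : g.toHom.range ≤ D) (g.toHom.mem_range_self x)
  have hj : j₁.comp i₁ = j₂.comp i₂ :=
    Embedding.ext fun a => Subtype.ext (DFunLike.congr_fun hfg a)
  refine ⟨.mk D, j₁, j₂, age.fg_substructure ((hB.1.range _).sup (hC.1.range _)), hj, ?_⟩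
  refine subset_antisymm ?_ ?_
  · rintro _ ⟨⟨x, rfl⟩, ⟨y, hy⟩⟩
    obtain ⟨a, ha⟩ := hinter ⟨⟨x, rfl⟩, ⟨y, congrArg Subtype.val hy⟩⟩
    exact ⟨a, Subtype.ext ha⟩
  · rintro _ ⟨a, rfl⟩
    exact ⟨⟨_, rfl⟩, ⟨i₂ a, (DFunLike.congr_fun hj a).symm⟩⟩

theorem strongAmalgamation_age_of_forall_exists_smul_ne [L.IsRelational]
    (hhom : L.IsUltrahomogeneous M)
    (hfix : ∀ s : Set M, s.Finite → ∀ b ∉ s, ∃ g ∈ fixingSubgroup (M ≃[L] M) s, g • b ≠ b) :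
    StrongAmalgamation (L.age M) := by
  intro A B C i₁ i₂ hA hB hC
  have : Finite A := Structure.fg_iff_finite.1 hA.1
  have : Finite B := Structure.fg_iff_finite.1 hB.1
  have : Finite C := Structure.fg_iff_finite.1 hC.1
  have : Nonempty (C ↪[L] M) := hC.2
  obtain ⟨f⟩ := hB.2
  obtain ⟨g, hg⟩ := hhom.extend_embedding hA.1 (f.comp i₁) i₂
  -- move the new points of `C` off those of `B`, keeping the common part `A` in place
  obtain ⟨k, hk, hdisj⟩ := exists_mem_fixingSubgroup_disjoint_smul hfix
    (Set.finite_range (f.comp i₁)) (Set.finite_range f).sdiff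
    (Set.finite_range g) Set.disjoint_sdiff_left
  rw [mem_fixingSubgroup_iff] at hk
  refine exists_strongAmalgam_of_embeddings hB hC i₁ i₂ f (k.toEmbedding.comp g) ?_ ?_
  · ext a
    exact (hk _ ⟨a, rfl⟩).symm.trans (congrArg k (DFunLike.congr_fun hg a))
  · rintro _ ⟨⟨x, rfl⟩, ⟨y, hy⟩⟩
    by_contra hx
    exact Set.disjoint_left.1 hdisj (Set.mem_smul_set.2 ⟨g y, ⟨y, rfl⟩, hy⟩) ⟨⟨x, rfl⟩, hx⟩

end FirstOrder.Language

theorem strongAmalgamation_iff_trivial_gdcl_general {L : FirstOrder.Language.{u, u}}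
    [L.IsRelational]
    (K : Set (CategoryTheory.Bundled.{u} L.Structure))
    (M : Type u) [L.Structure M]
    (hhom : L.IsUltrahomogeneous M) (hage : L.age M = K) :
    StrongAmalgamation K ↔
      ∀ A : L.Substructure M, Substructure.FG A → gdcl L M (A : Set M) = (A : Set M) := by
  subst hage
  refine ⟨fun hSAP A hA => gdcl_eq_self_iff.2 fun b hb =>
    exists_smul_ne_of_strongAmalgamation hhom hSAP hA hb, fun h => ?_⟩
  refine strongAmalgamation_age_of_forall_exists_smul_ne hhom fun s hs => gdcl_eq_self_iff.1 ?_
  simpa only [Substructure.closure_eq_of_isRelational] using h _ (Substructure.fg_closure hs)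

/-- For a countable relational language `L`, a Fraïssé class `K` of finite
structures, and the countable ultrahomogeneous structure `M` with age `K`, the class `K` has
the strong amalgamation property iff `M` has trivial group-theoretic definable closure. -/
theorem strongAmalgamation_iff_trivial_gdcl {L : FirstOrder.Language.{u, u}}
    [L.IsRelational] (hL : L.card ≤ ℵ₀)
    (K : Set (CategoryTheory.Bundled.{u} L.Structure)) (hK : L.IsFraisse K)
    (M : Type u) [L.Structure M] [Countable M]
    (hhom : L.IsUltrahomogeneous M) (hage : L.age M = K) :
    StrongAmalgamation K ↔
      ∀ A : L.Substructure M, Substructure.FG A → gdcl L M (A : Set M) = (A : Set M) :=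
  strongAmalgamation_iff_trivial_gdcl_general K M hhom hage
end

section
/- Let K be a Fraïssé class of L-structures and let M be a Fraïssé limit of K, i.e., (a) every member of K embeds into M, and (b) for every member B of K and any two embeddings i, j: B → M there is an automorphism g of M with i = g ∘ j. Then M satisfies the Fraïssé theory of K in the following semantic sense: (1) for every A ∈ K and every tuple a generating A, there is a tuple c in M with the same quantifier-free type as a; and (2) whenever A, B ∈ K with A a substructure of B, a is a tuple generating A, the concatenated tuple ab generates B, and c is a tuple in M whose quantifier-free type in M equals the quantifier-free type of a in A, then there is a tuple d in M such that the quantifier-free type of cd in M equals the quantifier-free type of ab in B. -/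
open FirstOrder FirstOrder.Language Set Cardinal

universe u

/-- Two tuples (in possibly different structures) have the same quantifier-free type if they
satisfy exactly the same quantifier-free formulas. -/
def SameQfType (L : FirstOrder.Language.{u, u}) {ι : Type u} {M N : Type u}
    [L.Structure M] [L.Structure N] (a : ι → M) (b : ι → N) : Prop :=
  ∀ φ : L.Formula ι, φ.IsQF → (φ.Realize a ↔ φ.Realize b)


section Aux

variable {L : FirstOrder.Language.{u, u}} {ι : Type u}

private lemma exists_term_of_mem_closure {B : Type u} [L.Structure B] (a : ι → B) {x : B}
    (hx : x ∈ Substructure.closure L (Set.range a)) :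
    ∃ t : L.Term ι, t.realize a = x := by
  rw [Substructure.mem_closure_iff_exists_term] at hx
  obtain ⟨t, ht⟩ := hx
  refine ⟨t.relabel (fun y => y.2.choose), ?_⟩
  rw [Term.realize_relabel, ← ht]
  congr 1
  funext y
  exact y.2.choose_spec

private lemma SameQfType.term_eq_iff {B M : Type u} [L.Structure B] [L.Structure M]
    {a : ι → B} {c : ι → M} (h : SameQfType L a c) (t t' : L.Term ι) :
    t.realize a = t'.realize a ↔ t.realize c = t'.realize c := by
  have := h (t.equal t') ((BoundedFormula.IsAtomic.equal _ _).isQF)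
  rwa [Formula.realize_equal, Formula.realize_equal] at this

private lemma SameQfType.rel_iff {B M : Type u} [L.Structure B] [L.Structure M]
    {a : ι → B} {c : ι → M} (h : SameQfType L a c) {n : ℕ} (R : L.Relations n)
    (ts : Fin n → L.Term ι) :
    (Structure.RelMap R (fun i => (ts i).realize a) ↔
      Structure.RelMap R (fun i => (ts i).realize c)) := by
  have := h (R.formula ts) ((BoundedFormula.IsAtomic.rel _ _).isQF)
  rwa [Formula.realize_rel, Formula.realize_rel] at this

/-- Quantifier-free type is preserved by embeddings. -/
private lemma sameQfType_comp_embedding {B M : Type u} [L.Structure B] [L.Structure M]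
    (f : B ↪[L] M) (a : ι → B) : SameQfType L a (f ∘ a) := by
  intro φ hφ
  have := hφ.realize_embedding f (v := a) (xs := default)
  rw [Subsingleton.elim (f ∘ (default : Fin 0 → B)) default] at this
  exact this.symm

end Aux

/-- A Fraïssé limit `M` of a Fraïssé class `K` (every member of `K` embeds
into `M`, and any two embeddings of a member of `K` into `M` differ by an automorphism of `M`)
satisfies the Fraïssé theory of `K` semantically: every generating tuple of a member of `K` is
realized in `M` up to quantifier-free type, and quantifier-free types of generating tuples can
be extended as in the extension axioms. -/
theorem fraisse_limit_satisfies_fraisse_theory {L : FirstOrder.Language.{u, u}}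
    (K : Set (CategoryTheory.Bundled.{u} L.Structure))
    -- K is a Fraïssé class:
    (hiso : ∀ A B : CategoryTheory.Bundled.{u} L.Structure,
      Nonempty (A ≃[L] B) → A ∈ K → B ∈ K)
    (hHP : ∀ A : CategoryTheory.Bundled.{u} L.Structure, A ∈ K →
      ∀ S : L.Substructure A, (⟨(S : Type u), inferInstance⟩ : CategoryTheory.Bundled.{u} L.Structure) ∈ K)
    (hJEP : ∀ A ∈ K, ∀ B ∈ K, ∃ C ∈ K, Nonempty (A ↪[L] C) ∧ Nonempty (B ↪[L] C))
    (hAP : ∀ (A B C : CategoryTheory.Bundled.{u} L.Structure) (i₁ : A ↪[L] B) (i₂ : A ↪[L] C),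
      A ∈ K → B ∈ K → C ∈ K →
        ∃ (D : CategoryTheory.Bundled.{u} L.Structure) (j₁ : B ↪[L] D) (j₂ : C ↪[L] D),
          D ∈ K ∧ j₁.comp i₁ = j₂.comp i₂)
    (M : Type u) [L.Structure M]
    -- M is a Fraïssé limit of K:
    (hembed : ∀ A : CategoryTheory.Bundled.{u} L.Structure, A ∈ K → Nonempty (A ↪[L] M))
    (hhomog : ∀ A : CategoryTheory.Bundled.{u} L.Structure, A ∈ K →
      ∀ i j : A ↪[L] M, ∃ g : M ≃[L] M, i = g.toEmbedding.comp j) :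
    -- (1) every generating tuple of a member of K is realized in M up to qf type
    (∀ A : CategoryTheory.Bundled.{u} L.Structure, A ∈ K → ∀ (ι : Type u) (a : ι → A),
      Substructure.closure L (Set.range a) = ⊤ →
        ∃ c : ι → M, SameQfType L a c) ∧
    -- (2) extension axioms hold in M
    (∀ B : CategoryTheory.Bundled.{u} L.Structure, B ∈ K →
      ∀ (ι ι' : Type u) (a : ι → B) (b : ι' → B),
        (⟨((Substructure.closure L (Set.range a) : L.Substructure B) : Type u), inferInstance⟩ :
          CategoryTheory.Bundled.{u} L.Structure) ∈ K →
        Substructure.closure L (Set.range a ∪ Set.range b) = ⊤ →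
        ∀ c : ι → M, SameQfType L a c →
          ∃ d : ι' → M, SameQfType L (Sum.elim a b) (Sum.elim c d)) := by
  classical
  have part1 : ∀ A : CategoryTheory.Bundled.{u} L.Structure, A ∈ K → ∀ (ι : Type u) (a : ι → A),
      Substructure.closure L (Set.range a) = ⊤ → ∃ c : ι → M, SameQfType L a c := by
    intro A hA ι a _
    obtain ⟨f⟩ := hembed A hA
    exact ⟨f ∘ a, sameQfType_comp_embedding f a⟩
  refine ⟨part1, ?_⟩
  intro B hB ι ι' a b hAK _ c hc
  set S : L.Substructure B := Substructure.closure L (Set.range a) with hS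
  -- every element of S is the realization of a term in the variables ι
  have hterm : ∀ x : S, ∃ t : L.Term ι, t.realize a = (x : B) :=
    fun x => exists_term_of_mem_closure a x.2
  choose termOf htermOf using hterm
  -- the map sending x ∈ S to the realization in M (via c) of a term for x
  set F : S → M := fun x => (termOf x).realize c with hF
  have hFt : ∀ (x : S) (t : L.Term ι), t.realize a = (x : B) → F x = t.realize c := by
    intro x t ht
    exact (hc.term_eq_iff (termOf x) t).mp ((htermOf x).trans ht.symm)
  -- F is an embedding of S into M
  have hFinj : Function.Injective F := by
    intro x y hxy
    have := (hc.term_eq_iff (termOf x) (termOf y)).mpr hxy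
    exact Subtype.ext ((htermOf x).symm.trans (this.trans (htermOf y)))
  set hEmb : (S : Type u) ↪[L] M :=
    { toFun := F
      inj' := hFinj
      map_fun' := by
        intro n f v
        have h1 : (Term.func f (fun i => termOf (v i))).realize a = ((Structure.funMap f v : S) : B) := by
          simp only [Term.realize_func]
          congr 1
          funext i
          exact htermOf (v i)
        show F (Structure.funMap f v) = Structure.funMap f (F ∘ v)
        rw [hFt (Structure.funMap f v) _ h1, Term.realize_func]
        rfl
      map_rel' := by
        intro n r v
        have h1 : Structure.RelMap r (F ∘ v) =
            Structure.RelMap r (fun i => (termOf (v i)).realize c) := rfl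
        have h2 : (Structure.RelMap r v : Prop) =
            Structure.RelMap r (fun i => (termOf (v i)).realize a) := by
          have : (fun i => ((v i : B))) = fun i => (termOf (v i)).realize a := by
            funext i; exact (htermOf (v i)).symm
          show (Structure.RelMap r (fun i => ((v i : B))) : Prop) = _
          rw [this]
        show Structure.RelMap r (F ∘ v) ↔ Structure.RelMap r v
        rw [h1, h2]
        exact (hc.rel_iff r (fun i => termOf (v i))).symm }
  -- the tuple a, viewed inside S
  set a' : ι → S := fun x => ⟨a x, hS ▸ Substructure.subset_closure (Set.mem_range_self x)⟩
    with ha'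
  have hEmba : ∀ x, hEmb (a' x) = c x := fun x => hFt (a' x) (Term.var x) rfl
  -- an embedding of B into M
  obtain ⟨g⟩ := hembed B hB
  -- homogeneity applied to S with the two embeddings hEmb and g ∘ subtype
  obtain ⟨σ, hσ⟩ := hhomog ⟨(S : Type u), inferInstance⟩ hAK hEmb (g.comp S.subtype)
  refine ⟨fun y => σ (g (b y)), ?_⟩
  have hkey : Sum.elim c (fun y => σ (g (b y))) = ⇑(σ.toEmbedding.comp g) ∘ Sum.elim a b := by
    funext z
    cases z with
    | inl x =>
      have : a x = S.subtype (a' x) := rfl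
      simp only [Sum.elim_inl, Embedding.comp_apply, Function.comp_apply, Equiv.coe_toEmbedding]
      rw [this, ← Embedding.comp_apply g S.subtype, ← Embedding.comp_apply σ.toEmbedding,
        ← hσ, hEmba]
    | inr y => rfl
  have := sameQfType_comp_embedding (σ.toEmbedding.comp g) (Sum.elim a b)
  rwa [← hkey] at this
end

section
/- Let L be a relational first-order language and M an L-structure, with ≡ defined by: a ≡ b iff for every atomic L-formula ψ(x, y⃗) and every tuple c⃗ from M, M ⊨ ψ(a, c⃗) iff M ⊨ ψ(b, c⃗). If M has a ≡-equivalence class A of cardinality κ, then the automorphism group Aut(M) has a subgroup isomorphic to the full permutation group of κ; that is, there is an injective group homomorphism from the group of permutations of A into Aut(M). -/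
open FirstOrder FirstOrder.Language Set Cardinal

universe u

/-- `a ≡ b` : `a` and `b` satisfy the same atomic formulas with arbitrary parameter tuples. -/
def AtomEquiv (L : FirstOrder.Language.{u, u}) (M : Type u) [L.Structure M] (a b : M) : Prop :=
  ∀ (n : ℕ) (φ : L.Formula (Fin (n + 1))), φ.IsAtomic →
    ∀ c : Fin n → M, (φ.Realize (Fin.cons a c) ↔ φ.Realize (Fin.cons b c))

section Aux

variable {L : FirstOrder.Language.{u, u}} {M : Type u} [L.Structure M]

lemma atomEquiv_refl (a : M) : AtomEquiv L M a a := fun _ _ _ _ => Iff.rfl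

lemma atomEquiv_symm {a b : M} (h : AtomEquiv L M a b) : AtomEquiv L M b a :=
  fun n φ hφ c => (h n φ hφ c).symm

lemma atomEquiv_trans {a b c : M} (h : AtomEquiv L M a b) (h' : AtomEquiv L M b c) :
    AtomEquiv L M a c := fun n φ hφ d => (h n φ hφ d).trans (h' n φ hφ d)

lemma relMap_update {m : ℕ} (R : L.Relations m) (x : Fin m → M) (j : Fin m) (b : M)
    (h : AtomEquiv L M (x j) b) :
    Structure.RelMap R x ↔ Structure.RelMap R (Function.update x j b) := by
  classical
  set φ : L.Formula (Fin (m + 1)) :=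
    R.formula (fun i => Term.var (if i = j then 0 else i.succ)) with hφ
  have hat : φ.IsAtomic := BoundedFormula.IsAtomic.rel _ _
  have key := h m φ hat x
  simp only [hφ, Formula.realize_rel, Term.realize_var] at key
  convert key using 2 <;> funext i
  · by_cases hij : i = j <;> simp [hij, Function.update]
  · by_cases hij : i = j <;> simp [hij, Function.update]

lemma relMap_congr {m : ℕ} (R : L.Relations m) (x y : Fin m → M)
    (h : ∀ i, AtomEquiv L M (x i) (y i)) :
    Structure.RelMap R x ↔ Structure.RelMap R y := by
  classical
  have main : ∀ k : ℕ, k ≤ m →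
      (Structure.RelMap R x ↔ Structure.RelMap R (fun i => if i.val < k then y i else x i)) := by
    intro k
    induction k with
    | zero => intro _; simp
    | succ k ih =>
      intro hk
      have hkm : k < m := hk
      refine (ih hkm.le).trans ?_
      have : (fun i : Fin m => if i.val < k + 1 then y i else x i) =
          Function.update (fun i : Fin m => if i.val < k then y i else x i) ⟨k, hkm⟩ (y ⟨k, hkm⟩) := by
        funext i
        rcases eq_or_ne i ⟨k, hkm⟩ with rfl | hne
        · simp
        · have : i.val ≠ k := fun hc => hne (Fin.ext hc)
          rw [Function.update_of_ne hne]
          rcases lt_or_ge i.val k with h1 | h1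
          · simp [h1, Nat.lt_succ_of_lt h1]
          · have : ¬ i.val < k + 1 := by omega
            simp [Nat.not_lt.mpr h1, this]
      rw [this]
      apply relMap_update
      simpa using h ⟨k, hkm⟩
  have := main m le_rfl
  simpa using this

end Aux

/-- If `M` (in a relational language) has a `≡`-equivalence class `A` of
cardinality `κ`, then the full permutation group of `A` (i.e. of `κ`) embeds into `Aut(M)`:
there is an injective, composition-preserving map from `Perm A` to `M ≃[L] M`. -/
theorem perm_group_embeds_in_automorphisms {L : FirstOrder.Language.{u, u}}
    [L.IsRelational] {M : Type u} [L.Structure M]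
    (A : Set M) (hA : ∃ a₀ : M, A = {x | AtomEquiv L M x a₀})
    (κ : Cardinal.{u}) (hcard : #A = κ) :
    ∃ F : Equiv.Perm A → (M ≃[L] M), Function.Injective F ∧
      ∀ p q : Equiv.Perm A, F (p * q) = (F p).comp (F q) := by
  classical
  obtain ⟨a₀, rfl⟩ := hA
  set A : Set M := {x | AtomEquiv L M x a₀} with hAdef
  have equiv_of_mem : ∀ {a b : M}, a ∈ A → b ∈ A → AtomEquiv L M a b := by
    intro a b ha hb
    exact atomEquiv_trans ha (atomEquiv_symm hb)
  have key : ∀ (p : Equiv.Perm A) (x : M), AtomEquiv L M x (p.extendDomain (Equiv.refl A) x) := by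
    intro p x
    by_cases hx : x ∈ A
    · rw [Equiv.Perm.extendDomain_apply_subtype _ _ hx]
      exact equiv_of_mem hx (Subtype.mem _)
    · rw [Equiv.Perm.extendDomain_apply_not_subtype _ _ hx]
      exact atomEquiv_refl x
  set G : Equiv.Perm A →* Equiv.Perm M := Equiv.Perm.extendDomainHom (Equiv.refl A) with hG
  refine ⟨fun p => ⟨G p, fun f => isEmptyElim f, ?_⟩, ?_, ?_⟩
  · intro n r x
    exact (relMap_congr r x (G p ∘ x) (fun i => key p (x i))).symm
  · intro p q hpq
    apply Equiv.Perm.extendDomainHom_injective (Equiv.refl A)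
    have : (⟨G p, fun f => isEmptyElim f, _⟩ : M ≃[L] M).toEquiv =
      (⟨G q, fun f => isEmptyElim f, _⟩ : M ≃[L] M).toEquiv := congrArg _ hpq
    exact this
  · intro p q
    ext x
    show (G (p * q)) x = (G p) ((G q) x)
    rw [map_mul]
    rfl
end
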